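/- Let P be the quadratic form on pairs of symmetric 2-tensors on \mathbb{R}^{1+4} defined by P(\pi,\theta) = \tfrac14 \bar{g}^{\mu\rho}\bar{g}^{\nu\sigma}(\pi_{\mu\rho}\theta_{\nu\sigma} - 2\pi_{\mu\nu}\theta_{\rho\sigma}), where \bar{g} is the Minkowski metric diag(-1,1,1,1,1). Then with respect to the null frame \mathcal{U}=\{L,\underline{L},S^1,S^2,\partial_y\} and the tangential frame \mathcal{T}=\{L,S^1,S^2,\partial_y\}, there is an absolute constant C with |P(\pi,\theta)| \le C( |\pi|_{\mathcal{T}\mathcal{U}}|\theta|_{\mathcal{T}\mathcal{U}} + |\pi|_{\mathcal{L}\mathcal{L}}|\theta| + |\pi||\theta|_{\mathcal{L}\mathcal{L}} ), where |\pi|_{\mathcal{V}\mathcal{W}} = \sum_{V\in\mathcal{V},W\in\mathcal{W}}|\pi_{VW}|, \pi_{VW}=\pi_{\alpha\beta}V^\alpha W^\beta, and |\pi| is the sum of all null-frame components. -/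

import Mathlib

/-! Expanding the inverse metric in the null frame,
`ḡ⁻¹ = -½ (L ⊗ L̲ + L̲ ⊗ L) + S¹ ⊗ S¹ + S² ⊗ S² + ∂_y ⊗ ∂_y`,
turns `P(π, θ)` into the same trace expression in the frame components `π_{UV}`, `θ_{UV}`,
with `ḡ⁻¹` replaced by the inverse Gram matrix `N` of the frame. In `N` the vector `L̲` is paired
only with `L`, so the single component not controlled by `|π|_{𝒯𝒰}`, namely `π_{L̲L̲}`, can only
multiply `θ_{LL}` (and symmetrically); every other product contains a tangential component of
both `π` and `θ`. -/

open Real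

namespace Stmt2

/-- Minkowski metric `diag(-1,1,1,1,1)` on `ℝ^{1+4}`. -/
noncomputable def η : Fin 5 → ℝ := ![-1, 1, 1, 1, 1]

/-- Minkowski inner product of two vectors. -/
noncomputable def gmet (V W : Fin 5 → ℝ) : ℝ := ∑ α, η α * V α * W α

noncomputable def rad (x : Fin 3 → ℝ) : ℝ := Real.sqrt (∑ j, (x j) ^ 2)

/-- `L = ∂_t + ∂_r` (components in the coordinates `t, x¹, x², x³, y`). -/
noncomputable def Lvec (x : Fin 3 → ℝ) : Fin 5 → ℝ :=
  ![1, x 0 / rad x, x 1 / rad x, x 2 / rad x, 0]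

/-- `L̲ = ∂_t - ∂_r`. -/
noncomputable def Lbvec (x : Fin 3 → ℝ) : Fin 5 → ℝ :=
  ![1, -(x 0 / rad x), -(x 1 / rad x), -(x 2 / rad x), 0]

/-- The circle direction `∂_y`. -/
noncomputable def ey : Fin 5 → ℝ := ![0, 0, 0, 0, 1]

/-- Frame component `π_{VW} = π_{αβ} V^α W^β` of a covariant 2-tensor. -/
noncomputable def comp (tp : Fin 5 → Fin 5 → ℝ) (V W : Fin 5 → ℝ) : ℝ :=
  ∑ α, ∑ β, tp α β * V α * W β

/-- The weak-null quadratic form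
`P(π,θ) = (1/4) ḡ^{μρ} ḡ^{νσ} (π_{μρ}θ_{νσ} - 2 π_{μν}θ_{ρσ})`. -/
noncomputable def Pform (tp tq : Fin 5 → Fin 5 → ℝ) : ℝ :=
  (1 / 4) * ((∑ μ, η μ * tp μ μ) * (∑ ν, η ν * tq ν ν)
    - 2 * ∑ μ, ∑ ν, η μ * η ν * tp μ ν * tq μ ν)

/-- The full null frame `𝒰 = {L, L̲, S¹, S², ∂_y}`. -/
noncomputable def frameU (x : Fin 3 → ℝ) (S1 S2 : Fin 5 → ℝ) : Fin 5 → (Fin 5 → ℝ) :=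
  ![Lvec x, Lbvec x, S1, S2, ey]

/-- The tangential frame `𝒯 = {L, S¹, S², ∂_y}`. -/
noncomputable def frameT (x : Fin 3 → ℝ) (S1 S2 : Fin 5 → ℝ) : Fin 4 → (Fin 5 → ℝ) :=
  ![Lvec x, S1, S2, ey]

/-- `|π|_{𝒯𝒰}`. -/
noncomputable def normTU (x : Fin 3 → ℝ) (S1 S2 : Fin 5 → ℝ) (tp : Fin 5 → Fin 5 → ℝ) : ℝ :=
  ∑ i : Fin 4, ∑ j : Fin 5, |comp tp (frameT x S1 S2 i) (frameU x S1 S2 j)|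

/-- `|π|`: sum of all null-frame components. -/
noncomputable def normFull (x : Fin 3 → ℝ) (S1 S2 : Fin 5 → ℝ) (tp : Fin 5 → Fin 5 → ℝ) : ℝ :=
  ∑ i : Fin 5, ∑ j : Fin 5, |comp tp (frameU x S1 S2 i) (frameU x S1 S2 j)|

end Stmt2

open Matrix

theorem abs_le_sum_sum_abs {α β : Type*} [Fintype α] [Fintype β] (f : α → β → ℝ) (a : α) (b : β) :
    |f a b| ≤ ∑ i, ∑ j, |f i j| :=
  (Finset.single_le_sum (f := fun j => |f a j|) (fun _ _ => abs_nonneg _) (Finset.mem_univ b)).trans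
    (Finset.single_le_sum (f := fun i => ∑ j, |f i j|)
      (fun _ _ => Finset.sum_nonneg fun _ _ => abs_nonneg _) (Finset.mem_univ a))

namespace Matrix

variable {n R : Type*} [Fintype n] [DecidableEq n] [CommRing R]

theorem mul_mul_eq_of_mul_mul_eq_of_mul_eq_one {G H N M M' : Matrix n n R} (hG : G * G = 1)
    (hH : M * G * M' = H) (hN : H * N = 1) : M' * N * M = G := by
  have h : G * M' * N * M = 1 := by
    rw [mul_eq_one_comm, ← hN, ← hH]; simp only [Matrix.mul_assoc]
  calc M' * N * M = G * G * (M' * N * M) := by rw [hG, Matrix.one_mul]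
    _ = G * (G * M' * N * M) := by simp only [Matrix.mul_assoc]
    _ = G := by rw [h, Matrix.mul_one]

end Matrix

section WeakNull

variable {ι : Type*}

noncomputable def weakNullForm [Fintype ι] (N p q : Matrix ι ι ℝ) : ℝ :=
  (1 / 4) * (trace (N * p) * trace (N * q) - 2 * trace (N * p * N * q))

theorem weakNullForm_transpose_mul_mul [Fintype ι] {κ : Type*} [Fintype κ] (N : Matrix κ κ ℝ)
    (M : Matrix κ ι ℝ) (p q : Matrix ι ι ℝ) :
    weakNullForm (Mᵀ * N * M) p q = weakNullForm N (M * p * Mᵀ) (M * q * Mᵀ) := by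
  have h1 : ∀ r : Matrix ι ι ℝ, trace (Mᵀ * N * M * r) = trace (N * (M * r * Mᵀ)) := by
    intro r
    calc trace (Mᵀ * N * M * r) = trace (Mᵀ * (N * M * r)) := by simp only [Matrix.mul_assoc]
      _ = trace (N * M * r * Mᵀ) := trace_mul_comm _ _
      _ = trace (N * (M * r * Mᵀ)) := by simp only [Matrix.mul_assoc]
  have h2 : trace (Mᵀ * N * M * p * (Mᵀ * N * M) * q)
      = trace (N * (M * p * Mᵀ) * N * (M * q * Mᵀ)) := by
    rw [show Mᵀ * N * M * p * (Mᵀ * N * M) * q = Mᵀ * (N * M * p * Mᵀ * N * M * q) by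
      simp only [Matrix.mul_assoc], trace_mul_comm]
    simp only [Matrix.mul_assoc]
  simp only [weakNullForm, h1, h2]

noncomputable def weakNullCoeff (N : Matrix ι ι ℝ) (i j k l : ι) : ℝ :=
  (1 / 4) * (N j i * N l k - 2 * N l i * N j k)

theorem weakNullForm_eq_sum [Fintype ι] (N p q : Matrix ι ι ℝ) :
    weakNullForm N p q = ∑ i, ∑ j, ∑ k, ∑ l, weakNullCoeff N i j k l * p i j * q k l := by
  have h1 : ∀ r : Matrix ι ι ℝ, trace (N * r) = ∑ i, ∑ j, N j i * r i j := by
    intro r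
    rw [trace_mul_comm]
    simp only [trace, diag, mul_apply]
    exact Finset.sum_congr rfl fun _ _ => Finset.sum_congr rfl fun _ _ => mul_comm _ _
  have h2 : trace (N * p * N * q) = ∑ i, ∑ j, ∑ k, ∑ l, p i j * (N j k * (q k l * N l i)) := by
    rw [show N * p * N * q = N * (p * N * q) by simp only [Matrix.mul_assoc], trace_mul_comm]
    simp only [Matrix.mul_assoc]
    simp only [trace, diag, mul_apply, Finset.mul_sum]
  rw [weakNullForm, h1 p, h1 q, h2]
  simp only [Finset.sum_mul]
  simp only [Finset.mul_sum, ← Finset.sum_sub_distrib]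
  refine Finset.sum_congr rfl fun i _ => Finset.sum_congr rfl fun j _ =>
    Finset.sum_congr rfl fun k _ => Finset.sum_congr rfl fun l _ => ?_
  rw [weakNullCoeff]
  ring

-- `b` and `g` stand for `L̲` and `L`.
variable {N : Matrix ι ι ℝ} {b g : ι}

theorem weakNullCoeff_left_eq_zero (hbg : b ≠ g) (hrow : ∀ k ≠ g, N b k = 0)
    (hcol : ∀ k ≠ g, N k b = 0) {k l : ι} (hkl : (k, l) ≠ (g, g)) :
    weakNullCoeff N b b k l = 0 := by
  have hl : N l b * N b k = 0 := by
    by_cases hl : l = g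
    · rw [hrow k fun hk => hkl (by rw [hk, hl]), mul_zero]
    · rw [hcol l hl, zero_mul]
  rw [weakNullCoeff, hrow b hbg, mul_assoc 2, hl]
  ring

theorem weakNullCoeff_right_eq_zero (hbg : b ≠ g) (hrow : ∀ k ≠ g, N b k = 0)
    (hcol : ∀ k ≠ g, N k b = 0) {i j : ι} (hij : (i, j) ≠ (g, g)) :
    weakNullCoeff N i j b b = 0 := by
  have hi : N b i * N j b = 0 := by
    by_cases hi : i = g
    · rw [hcol j fun hj => hij (by rw [hi, hj]), mul_zero]
    · rw [hrow i hi, zero_mul]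
  rw [weakNullCoeff, hrow b hbg, mul_assoc 2, hi]
  ring

theorem weakNullCoeff_eq_zero_or_abs_mul_le (hbg : b ≠ g) (hrow : ∀ k ≠ g, N b k = 0)
    (hcol : ∀ k ≠ g, N k b = 0) {p q : Matrix ι ι ℝ} {A B FP FQ : ℝ}
    (hpA : ∀ i j, (i, j) ≠ (b, b) → |p i j| ≤ A) (hpF : ∀ i j, |p i j| ≤ FP)
    (hqB : ∀ i j, (i, j) ≠ (b, b) → |q i j| ≤ B) (hqF : ∀ i j, |q i j| ≤ FQ) (i j k l : ι) :
    weakNullCoeff N i j k l = 0 ∨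
      |p i j| * |q k l| ≤ A * B + |p g g| * FQ + FP * |q g g| := by
  have hbg' : (b, g) ≠ (b, b) := by simp [hbg.symm]
  have hAB : 0 ≤ A * B :=
    mul_nonneg ((abs_nonneg _).trans (hpA b g hbg')) ((abs_nonneg _).trans (hqB b g hbg'))
  have hpFQ : 0 ≤ |p g g| * FQ := mul_nonneg (abs_nonneg _) ((abs_nonneg _).trans (hqF b b))
  have hFPq : 0 ≤ FP * |q g g| := mul_nonneg ((abs_nonneg _).trans (hpF b b)) (abs_nonneg _)
  by_cases hij : (i, j) = (b, b)
  · rw [(Prod.mk.inj hij).1, (Prod.mk.inj hij).2]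
    by_cases hkl : (k, l) = (g, g)
    · rw [(Prod.mk.inj hkl).1, (Prod.mk.inj hkl).2]
      have := mul_le_mul_of_nonneg_right (hpF b b) (abs_nonneg (q g g))
      exact Or.inr (by linarith)
    · exact Or.inl (weakNullCoeff_left_eq_zero hbg hrow hcol hkl)
  by_cases hkl : (k, l) = (b, b)
  · rw [(Prod.mk.inj hkl).1, (Prod.mk.inj hkl).2]
    by_cases hij' : (i, j) = (g, g)
    · rw [(Prod.mk.inj hij').1, (Prod.mk.inj hij').2]
      have := mul_le_mul_of_nonneg_left (hqF b b) (abs_nonneg (p g g))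
      exact Or.inr (by linarith)
    · exact Or.inl (weakNullCoeff_right_eq_zero hbg hrow hcol hij')
  have := mul_le_mul (hpA i j hij) (hqB k l hkl) (abs_nonneg _)
    ((abs_nonneg _).trans (hpA b g hbg'))
  exact Or.inr (by linarith)

theorem abs_weakNullForm_le [Fintype ι] (hbg : b ≠ g) (hrow : ∀ k ≠ g, N b k = 0)
    (hcol : ∀ k ≠ g, N k b = 0) {p q : Matrix ι ι ℝ} {A B FP FQ : ℝ}
    (hpA : ∀ i j, (i, j) ≠ (b, b) → |p i j| ≤ A) (hpF : ∀ i j, |p i j| ≤ FP)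
    (hqB : ∀ i j, (i, j) ≠ (b, b) → |q i j| ≤ B) (hqF : ∀ i j, |q i j| ≤ FQ) :
    |weakNullForm N p q| ≤ (∑ i, ∑ j, ∑ k, ∑ l, |weakNullCoeff N i j k l|) *
      (A * B + |p g g| * FQ + FP * |q g g|) := by
  have hterm : ∀ i j k l, |weakNullCoeff N i j k l * p i j * q k l| ≤
      |weakNullCoeff N i j k l| * (A * B + |p g g| * FQ + FP * |q g g|) := by
    intro i j k l
    rcases weakNullCoeff_eq_zero_or_abs_mul_le hbg hrow hcol hpA hpF hqB hqF i j k l with h | h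
    · simp [h]
    · rw [abs_mul, abs_mul, mul_assoc]
      exact mul_le_mul_of_nonneg_left h (abs_nonneg _)
  rw [weakNullForm_eq_sum]
  simp only [Finset.sum_mul]
  refine (Finset.abs_sum_le_sum_abs _ _).trans (Finset.sum_le_sum fun i _ => ?_)
  refine (Finset.abs_sum_le_sum_abs _ _).trans (Finset.sum_le_sum fun j _ => ?_)
  refine (Finset.abs_sum_le_sum_abs _ _).trans (Finset.sum_le_sum fun k _ => ?_)
  exact (Finset.abs_sum_le_sum_abs _ _).trans (Finset.sum_le_sum fun l _ => hterm i j k l)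

end WeakNull

namespace Stmt2

open Matrix

lemma rad_pos {x : Fin 3 → ℝ} (hx : x ≠ 0) : 0 < rad x := by
  obtain ⟨j, hj⟩ := Function.ne_iff.1 hx
  refine Real.sqrt_pos.2 (lt_of_lt_of_le (pow_pos (abs_pos.2 hj) 2 |>.trans_eq (sq_abs _)) ?_)
  exact Finset.single_le_sum (f := fun k => x k ^ 2) (fun k _ => sq_nonneg _) (Finset.mem_univ j)

lemma rad_sq (x : Fin 3 → ℝ) : rad x ^ 2 = x 0 ^ 2 + x 1 ^ 2 + x 2 ^ 2 := by
  rw [rad, Real.sq_sqrt (by positivity), Fin.sum_univ_three]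

lemma gmet_comm (V W : Fin 5 → ℝ) : gmet V W = gmet W V :=
  Finset.sum_congr rfl fun _ _ => by ring

lemma gmet_eq (V W : Fin 5 → ℝ) :
    gmet V W = -(V 0 * W 0) + V 1 * W 1 + V 2 * W 2 + V 3 * W 3 + V 4 * W 4 := by
  simp [gmet, η, Fin.sum_univ_five]

lemma sum_div_rad_sq {x : Fin 3 → ℝ} (hx : x ≠ 0) :
    (x 0 / rad x) ^ 2 + (x 1 / rad x) ^ 2 + (x 2 / rad x) ^ 2 = 1 := by
  have hr := (rad_pos hx).ne'
  field_simp
  linarith [rad_sq x]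

lemma gmet_Lvec_self {x : Fin 3 → ℝ} (hx : x ≠ 0) : gmet (Lvec x) (Lvec x) = 0 := by
  simp only [gmet_eq, Lvec, cons_val_zero, cons_val_one, cons_val]
  linear_combination sum_div_rad_sq hx

lemma gmet_Lvec_Lbvec {x : Fin 3 → ℝ} (hx : x ≠ 0) : gmet (Lvec x) (Lbvec x) = -2 := by
  simp only [gmet_eq, Lvec, Lbvec, cons_val_zero, cons_val_one, cons_val]
  linear_combination -sum_div_rad_sq hx

lemma gmet_Lbvec_self {x : Fin 3 → ℝ} (hx : x ≠ 0) : gmet (Lbvec x) (Lbvec x) = 0 := by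
  simp only [gmet_eq, Lbvec, cons_val_zero, cons_val_one, cons_val]
  linear_combination sum_div_rad_sq hx

lemma gmet_Lvec_ey (x : Fin 3 → ℝ) : gmet (Lvec x) ey = 0 := by
  simp [gmet_eq, Lvec, ey]

lemma gmet_Lbvec_ey (x : Fin 3 → ℝ) : gmet (Lbvec x) ey = 0 := by
  simp [gmet_eq, Lbvec, ey]

lemma gmet_ey_self : gmet ey ey = 1 := by
  simp [gmet_eq, ey]

lemma diagonal_η_mul_self : diagonal η * diagonal η = 1 := by
  rw [diagonal_mul_diagonal, ← diagonal_one]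
  congr 1
  funext i
  fin_cases i <;> simp [η]

noncomputable def nullGram : Matrix (Fin 5) (Fin 5) ℝ :=
  !![0, -2, 0, 0, 0; -2, 0, 0, 0, 0; 0, 0, 1, 0, 0; 0, 0, 0, 1, 0; 0, 0, 0, 0, 1]

noncomputable def nullGramInv : Matrix (Fin 5) (Fin 5) ℝ :=
  !![0, -(1 / 2), 0, 0, 0; -(1 / 2), 0, 0, 0, 0; 0, 0, 1, 0, 0; 0, 0, 0, 1, 0; 0, 0, 0, 0, 1]

lemma nullGram_mul_nullGramInv : nullGram * nullGramInv = 1 := by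
  ext i j
  fin_cases i <;> fin_cases j <;>
    simp [nullGram, nullGramInv, mul_apply, Fin.sum_univ_five, one_apply]

lemma nullGramInv_row_one {k : Fin 5} (hk : k ≠ 0) : nullGramInv 1 k = 0 := by
  fin_cases k <;> simp_all [nullGramInv]

lemma nullGramInv_col_one {k : Fin 5} (hk : k ≠ 0) : nullGramInv k 1 = 0 := by
  fin_cases k <;> simp_all [nullGramInv]

lemma of_mul_mul_transpose_apply {κ : Type*} (F : κ → Fin 5 → ℝ) (tp : Fin 5 → Fin 5 → ℝ)
    (i j : κ) : (of F * of tp * (of F)ᵀ) i j = comp tp (F i) (F j) := by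
  simp only [mul_apply, transpose_apply, of_apply, Finset.sum_mul, comp]
  rw [Finset.sum_comm]
  exact Finset.sum_congr rfl fun _ _ => Finset.sum_congr rfl fun _ _ => by ring

lemma of_mul_diagonal_η_mul_transpose_apply {κ : Type*} (F : κ → Fin 5 → ℝ) (i j : κ) :
    (of F * diagonal η * (of F)ᵀ) i j = gmet (F i) (F j) := by
  rw [mul_apply]
  simp only [mul_diagonal, transpose_apply, of_apply, gmet]
  exact Finset.sum_congr rfl fun _ _ => by ring

lemma of_frameU_gram {x : Fin 3 → ℝ} (hx : x ≠ 0) {S1 S2 : Fin 5 → ℝ}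
    (h11 : gmet S1 S1 = 1) (h22 : gmet S2 S2 = 1) (h12 : gmet S1 S2 = 0)
    (hL1 : gmet (Lvec x) S1 = 0) (hL2 : gmet (Lvec x) S2 = 0)
    (hLb1 : gmet (Lbvec x) S1 = 0) (hLb2 : gmet (Lbvec x) S2 = 0)
    (hy1 : gmet ey S1 = 0) (hy2 : gmet ey S2 = 0) :
    of (frameU x S1 S2) * diagonal η * (of (frameU x S1 S2))ᵀ = nullGram := by
  ext i j
  rw [of_mul_diagonal_η_mul_transpose_apply]
  fin_cases i <;> fin_cases j <;>
    simp [frameU, nullGram, gmet_comm S2 S1, gmet_comm S1 (Lvec x), gmet_comm S2 (Lvec x),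
      gmet_comm S1 (Lbvec x), gmet_comm S2 (Lbvec x), gmet_comm S1 ey, gmet_comm S2 ey,
      gmet_comm (Lbvec x) (Lvec x), gmet_comm ey (Lvec x), gmet_comm ey (Lbvec x),
      gmet_Lvec_self hx, gmet_Lvec_Lbvec hx, gmet_Lbvec_self hx, gmet_Lvec_ey, gmet_Lbvec_ey,
      gmet_ey_self, *]

lemma Pform_eq_weakNullForm (tp : Fin 5 → Fin 5 → ℝ) {tq : Fin 5 → Fin 5 → ℝ}
    (hq : ∀ α β, tq α β = tq β α) :
    Pform tp tq = weakNullForm (diagonal η) (of tp) (of tq) := by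
  simp only [Pform, one_div, Finset.mul_sum, weakNullForm, trace, diag_apply, mul_apply,
    diagonal_apply, of_apply, ite_mul, zero_mul, Finset.sum_ite_eq, Finset.mem_univ, ↓reduceIte,
    mul_ite, mul_zero, Finset.sum_ite_eq', mul_eq_mul_left_iff, sub_right_inj, inv_eq_zero,
    OfNat.ofNat_ne_zero, or_false]
  refine Finset.sum_congr rfl fun μ _ => Finset.sum_congr rfl fun ν _ => ?_
  rw [hq ν μ]; ring

section FrameComponents

variable (x : Fin 3 → ℝ) (S1 S2 : Fin 5 → ℝ) {tp : Fin 5 → Fin 5 → ℝ}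

lemma comp_comm (hp : ∀ α β, tp α β = tp β α) (V W : Fin 5 → ℝ) : comp tp V W = comp tp W V := by
  rw [comp, comp, Finset.sum_comm]
  exact Finset.sum_congr rfl fun α _ => Finset.sum_congr rfl fun β _ => by rw [hp β α]; ring

lemma normTU_nonneg (tp : Fin 5 → Fin 5 → ℝ) : 0 ≤ normTU x S1 S2 tp :=
  Finset.sum_nonneg fun _ _ => Finset.sum_nonneg fun _ _ => abs_nonneg _

lemma normFull_nonneg (tp : Fin 5 → Fin 5 → ℝ) : 0 ≤ normFull x S1 S2 tp :=
  Finset.sum_nonneg fun _ _ => Finset.sum_nonneg fun _ _ => abs_nonneg _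

lemma abs_frameComponent_le_normFull (i j : Fin 5) :
    |(of (frameU x S1 S2) * of tp * (of (frameU x S1 S2))ᵀ) i j| ≤ normFull x S1 S2 tp := by
  rw [of_mul_mul_transpose_apply]
  exact abs_le_sum_sum_abs (fun i j => comp tp (frameU x S1 S2 i) (frameU x S1 S2 j)) i j

lemma abs_frameComponent_le_normTU (hp : ∀ α β, tp α β = tp β α) {i j : Fin 5}
    (hij : (i, j) ≠ (1, 1)) :
    |(of (frameU x S1 S2) * of tp * (of (frameU x S1 S2))ᵀ) i j| ≤ normTU x S1 S2 tp := by
  have tangential : ∀ i : Fin 5, i ≠ 1 → ∃ k, frameU x S1 S2 i = frameT x S1 S2 k := by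
    intro i hi
    fin_cases i
    exacts [⟨0, rfl⟩, absurd rfl hi, ⟨1, rfl⟩, ⟨2, rfl⟩, ⟨3, rfl⟩]
  have hT : ∀ (k : Fin 4) (j : Fin 5),
      |comp tp (frameT x S1 S2 k) (frameU x S1 S2 j)| ≤ normTU x S1 S2 tp :=
    abs_le_sum_sum_abs (fun k j => comp tp (frameT x S1 S2 k) (frameU x S1 S2 j))
  rw [of_mul_mul_transpose_apply]
  by_cases hi : i = 1
  · obtain ⟨k, hk⟩ := tangential j fun hj => hij (by rw [hi, hj])
    rw [comp_comm hp, hk]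
    exact hT k i
  · obtain ⟨k, hk⟩ := tangential i hi
    rw [hk]
    exact hT k j

end FrameComponents

/-- Structure of the weak null terms with respect to the null frame. -/
theorem weak_null_structure :
    ∃ C : ℝ, 0 < C ∧ ∀ x : Fin 3 → ℝ, x ≠ 0 →
      ∀ S1 S2 : Fin 5 → ℝ,
        gmet S1 S1 = 1 → gmet S2 S2 = 1 → gmet S1 S2 = 0 →
        gmet (Lvec x) S1 = 0 → gmet (Lvec x) S2 = 0 →
        gmet (Lbvec x) S1 = 0 → gmet (Lbvec x) S2 = 0 →
        gmet ey S1 = 0 → gmet ey S2 = 0 →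
        ∀ tp tq : Fin 5 → Fin 5 → ℝ,
          (∀ α β, tp α β = tp β α) → (∀ α β, tq α β = tq β α) →
          |Pform tp tq| ≤ C * (normTU x S1 S2 tp * normTU x S1 S2 tq +
            |comp tp (Lvec x) (Lvec x)| * normFull x S1 S2 tq +
            normFull x S1 S2 tp * |comp tq (Lvec x) (Lvec x)|) := by
  refine ⟨∑ i, ∑ j, ∑ k, ∑ l, |weakNullCoeff nullGramInv i j k l| + 1, by positivity, ?_⟩
  intro x hx S1 S2 h11 h22 h12 hL1 hL2 hLb1 hLb2 hy1 hy2 tp tq hp hq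
  set M := of (frameU x S1 S2)
  have hη : Mᵀ * nullGramInv * M = diagonal η :=
    Matrix.mul_mul_eq_of_mul_mul_eq_of_mul_eq_one diagonal_η_mul_self
      (of_frameU_gram hx h11 h22 h12 hL1 hL2 hLb1 hLb2 hy1 hy2) nullGram_mul_nullGramInv
  have hbound := abs_weakNullForm_le (by decide : (1 : Fin 5) ≠ 0)
    (fun _ => nullGramInv_row_one) (fun _ => nullGramInv_col_one)
    (fun _ _ => abs_frameComponent_le_normTU x S1 S2 hp)
    (abs_frameComponent_le_normFull x S1 S2)
    (fun _ _ => abs_frameComponent_le_normTU x S1 S2 hq)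
    (abs_frameComponent_le_normFull x S1 S2)
  rw [of_mul_mul_transpose_apply, of_mul_mul_transpose_apply] at hbound
  rw [Pform_eq_weakNullForm tp hq, ← hη, weakNullForm_transpose_mul_mul]
  refine hbound.trans (mul_le_mul_of_nonneg_right (le_add_of_nonneg_right zero_le_one) ?_)
  have hTU := normTU_nonneg x S1 S2
  have hFull := normFull_nonneg x S1 S2
  exact add_nonneg (add_nonneg (mul_nonneg (hTU tp) (hTU tq))
    (mul_nonneg (abs_nonneg _) (hFull tq))) (mul_nonneg (hFull tp) (abs_nonneg _))

end Stmt2
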